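/- (Serial uniform sampling parameters.) Let κ_i > 0, ρ ∈ (0,1), κ̃_i = 1 + κ_i/ρ², μ_g, μ_i > 0, ‖A_i‖² = κ_i μ_g μ_i, and uniform probabilities p_i = 1/n with n ≥ 2. Then the rate θ_uni = 1 − 2/(n + n max_j √κ̃_j) together with the step sizes σ_i = μ_i^{-1} / (max_j √κ̃_j − 1) and τ = μ_g^{-1} / (n − 2 + n max_j √κ̃_j) satisfies the serial-sampling step size conditions: θ_uni ≥ 1/(1 + 2 τ μ_g), θ_uni ≥ max_i ( 1 − 2 σ_i μ_i p_i / (1 + 2 σ_i μ_i) ), and max_i τ σ_i ‖A_i‖² θ_uni ≤ ρ² p_i. -/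

import Mathlib

/-!
With `m = max_j √κ̃_j > 1` and `D = n - 2 + n m`, one has `2 τ μ_g = 2 / D`, `σ_i μ_i = 1 / (m - 1)`
and `θ_uni = D / (D + 2)`. Hence the first two conditions hold with equality, and the third
reduces to `κ_i ≤ ρ² (m² - 1)`, which is `√κ̃_i ≤ m` squared.
-/

theorem one_lt_sqrt_one_add_div_sq {κ ρ : ℝ} (hκ : 0 < κ) (hρ : ρ ≠ 0) :
    1 < √(1 + κ / ρ ^ 2) :=
  Real.lt_sqrt_of_sq_lt <| by
    rw [one_pow]
    exact lt_add_of_pos_right 1 (by positivity)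

theorem le_sq_mul_sq_sub_one_of_sqrt_le {κ ρ M : ℝ} (hρ : ρ ≠ 0) (h : √(1 + κ / ρ ^ 2) ≤ M) :
    κ ≤ ρ ^ 2 * (M ^ 2 - 1) := by
  have hκM : κ / ρ ^ 2 ≤ M ^ 2 - 1 := by linarith [(Real.sqrt_le_iff.mp h).2]
  rwa [div_le_iff₀ (by positivity), mul_comm] at hκM

theorem one_div_one_add_two_div {D : ℝ} (hD : 0 < D) : 1 / (1 + 2 / D) = 1 - 2 / (D + 2) := by
  field_simp
  ring

section

variable {N M : ℝ}

theorem one_div_one_add_primal_step_eq {μg : ℝ} (hD : 0 < N - 2 + N * M) (hμg : μg ≠ 0) :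
    1 / (1 + 2 * (μg⁻¹ / (N - 2 + N * M)) * μg) = 1 - 2 / (N + N * M) := by
  have hτμg : 2 * (μg⁻¹ / (N - 2 + N * M)) * μg = 2 / (N - 2 + N * M) := by
    field_simp
  rw [hτμg, one_div_one_add_two_div hD]
  ring_nf

theorem dual_step_bound_eq {μ : ℝ} (hM : 1 < M) (hμ : μ ≠ 0) :
    1 - 2 * (μ⁻¹ / (M - 1)) * μ * (1 / N) / (1 + 2 * (μ⁻¹ / (M - 1)) * μ) =
      1 - 2 / (N + N * M) := by
  have hM1 : M - 1 ≠ 0 := by linarith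
  have hσμ : 2 * (μ⁻¹ / (M - 1)) * μ = 2 / (M - 1) := by
    field_simp
  have hM1' : M - 1 + 2 ≠ 0 := by linarith
  rw [hσμ]
  field_simp
  ring

theorem coupling_step_eq {μg μ κ : ℝ} (hM : 1 < M) (hD : 0 < N - 2 + N * M)
    (hμg : μg ≠ 0) (hμ : μ ≠ 0) :
    μg⁻¹ / (N - 2 + N * M) * (μ⁻¹ / (M - 1)) * (κ * μg * μ) * (1 - 2 / (N + N * M)) =
      κ / (N * (M ^ 2 - 1)) := by
  have hN : N ≠ 0 := by nlinarith
  have hM1 : M - 1 ≠ 0 := by linarith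
  have hM2 : M ^ 2 - 1 ≠ 0 := by nlinarith
  have hNM : N + N * M ≠ 0 := by linarith
  field_simp
  ring

theorem coupling_step_le {μg μ κ ρ : ℝ} (hM : 1 < M) (hD : 0 < N - 2 + N * M)
    (hμg : μg ≠ 0) (hμ : μ ≠ 0) (hκ : κ ≤ ρ ^ 2 * (M ^ 2 - 1)) :
    μg⁻¹ / (N - 2 + N * M) * (μ⁻¹ / (M - 1)) * (κ * μg * μ) * (1 - 2 / (N + N * M)) ≤
      ρ ^ 2 * (1 / N) := by
  have hN : 0 < N := by nlinarith
  rw [coupling_step_eq hM hD hμg hμ, div_le_iff₀ (by nlinarith)]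
  calc κ ≤ ρ ^ 2 * (M ^ 2 - 1) := hκ
    _ = ρ ^ 2 * (1 / N) * (N * (M ^ 2 - 1)) := by field_simp

end

theorem spdhg_serial_uniform_parameters {n : ℕ} (hn : 2 ≤ n)
    (κ μ normA : Fin n → ℝ) (μg ρ : ℝ)
    (hκ : ∀ i, 0 < κ i) (hρ : ρ ∈ Set.Ioo (0 : ℝ) 1) (hμg : 0 < μg) (hμ : ∀ i, 0 < μ i)
    (hA : ∀ i, normA i ^ 2 = κ i * μg * μ i) :
    let m : ℝ := Finset.univ.sup' (Finset.univ_nonempty_iff.mpr ⟨⟨0, by omega⟩⟩)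
      (fun j => Real.sqrt (1 + κ j / ρ ^ 2))
    let θuni : ℝ := 1 - 2 / ((n : ℝ) + (n : ℝ) * m)
    let σ : Fin n → ℝ := fun i => (μ i)⁻¹ / (m - 1)
    let τ : ℝ := μg⁻¹ / ((n : ℝ) - 2 + (n : ℝ) * m)
    (1 / (1 + 2 * τ * μg) ≤ θuni) ∧
    (∀ i, 1 - 2 * σ i * μ i * (1 / (n : ℝ)) / (1 + 2 * σ i * μ i) ≤ θuni) ∧
    (∀ i, τ * σ i * normA i ^ 2 * θuni ≤ ρ ^ 2 * (1 / (n : ℝ))) := by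
  intro m θuni σ τ
  have hρ0 : ρ ≠ 0 := hρ.1.ne'
  have hle : ∀ j, √(1 + κ j / ρ ^ 2) ≤ m := fun j =>
    Finset.le_sup' (fun j => √(1 + κ j / ρ ^ 2)) (Finset.mem_univ j)
  have hm : 1 < m := (one_lt_sqrt_one_add_div_sq (hκ ⟨0, by omega⟩) hρ0).trans_le (hle _)
  have hn2 : (2 : ℝ) ≤ n := by exact_mod_cast hn
  have hD : 0 < (n : ℝ) - 2 + n * m := by nlinarith
  refine ⟨(one_div_one_add_primal_step_eq hD hμg.ne').le,
    fun i => (dual_step_bound_eq hm (hμ i).ne').le, fun i => ?_⟩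
  rw [hA i]
  exact coupling_step_le hm hD hμg.ne' (hμ i).ne'
    (le_sq_mul_sq_sub_one_of_sqrt_le hρ0 (hle i))
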